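/- For the two-dimensional linear elementary cellular automaton T_0 with rule (Tu)_{i,j} = u_{i+1,j} + u_{i−1,j} + u_{i,j+1} + u_{i,j−1} (mod 2), starting from the single site seed, the number of nonzero states at time n equals 4^(s₂(n)), where s₂(n) is the binary digit sum of n, and the cumulative number of nonzero states from time 0 to 2^k − 1 equals 5^k. -/

import Mathlib

/-- The 2D linear elementary CA `T₀`:
`(Tu)_{i,j} = u_{i+1,j} + u_{i-1,j} + u_{i,j+1} + u_{i,j-1}` mod 2. -/
def caT0 (u : ℤ × ℤ → ZMod 2) : ℤ × ℤ → ZMod 2 :=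
  fun p => u (p.1 + 1, p.2) + u (p.1 - 1, p.2) + u (p.1, p.2 + 1) + u (p.1, p.2 - 1)

/-- The single site seed on `ℤ²`. -/
def seed2 : ℤ × ℤ → ZMod 2 := fun p => if p = (0, 0) then 1 else 0

/-!
In the group algebra `𝔽₂[ℤ²]` the automaton is multiplication by `t = x + x⁻¹ + y + y⁻¹`, so the
configuration at time `n` is `tⁿ`. Squaring is the Frobenius `f ↦ f(x², y²)`, which keeps the
number of monomials, so `#tⁿ` is unchanged from `m` to `2m`. From `2m` to `2m + 1` it is multiplied
by `4`: the exponents of `(tᵐ)²` are `2a` with `a` in the support of `tᵐ`, on which the parity of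
`i + j` is constant (`t` is homogeneous of odd degree). So two of them never differ by `2eᵢ`, nor by
anything outside `2ℤ²`, and the four translates of the support of `(tᵐ)²` by `±e₁, ±e₂` are
pairwise disjoint. Thus `#tⁿ = 4 ^ s₂(n)`, and splitting `n < 2 ^ (k+1)` by parity gives
`∑ 4 ^ s₂(n) = 5 ^ k`.
-/

open AddMonoidAlgebra Finset
open scoped Pointwise

namespace AddMonoidAlgebra

theorem pow_char_eq_mapDomain_nsmul {p : ℕ} [Fact p.Prime] {G : Type*} [AddCommMonoid G]
    (f : (ZMod p)[G]) : f ^ p = mapDomain (p • ·) f := by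
  have : CharP (ZMod p)[G] p := charP_of_injective_algebraMap' (ZMod p) p
  induction f using induction_linear with
  | zero => simp [zero_pow (Fact.out : p.Prime).ne_zero]
  | add f g hf hg => rw [add_pow_char, hf, hg, mapDomain_add]
  | single a r => rw [single_pow, ZMod.pow_card, mapDomain_single]

section TorsionFree

variable {p : ℕ} [Fact p.Prime] {G : Type*} [AddCommMonoid G] [IsAddTorsionFree G]

theorem support_coeff_pow_char [DecidableEq G] (f : (ZMod p)[G]) :
    (f ^ p).coeff.support = f.coeff.support.image (p • ·) := by
  rw [pow_char_eq_mapDomain_nsmul, coeff_mapDomain,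
    Finsupp.mapDomain_support_of_injective (IsAddTorsionFree.nsmul_right_injective
      (Fact.out : p.Prime).ne_zero)]

theorem card_support_coeff_pow_char (f : (ZMod p)[G]) :
    #(f ^ p).coeff.support = #f.coeff.support := by
  classical
  rw [support_coeff_pow_char, card_image_of_injective _
    (IsAddTorsionFree.nsmul_right_injective (Fact.out : p.Prime).ne_zero)]

end TorsionFree

section UniqueAdd

variable {R G : Type*} [Semiring R] [NoZeroDivisors R] [Add G] {f g : R[G]}

theorem support_coeff_mul_of_injOn [DecidableEq G]
    (h : Set.InjOn (fun x : G × G => x.1 + x.2) (f.coeff.support ×ˢ g.coeff.support)) :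
    (f * g).coeff.support = f.coeff.support + g.coeff.support := by
  refine (support_coeff_mul_subset f g).antisymm fun c hc => ?_
  obtain ⟨a, ha, b, hb, rfl⟩ := mem_add.1 hc
  have hunique : UniqueAdd f.coeff.support g.coeff.support a b := fun _ _ ha' hb' hab =>
    Prod.ext_iff.1 (h (Set.mk_mem_prod ha' hb') (Set.mk_mem_prod ha hb) hab)
  rw [Finsupp.mem_support_iff, coeff_mul_add_of_uniqueAdd hunique]
  exact mul_ne_zero (Finsupp.mem_support_iff.1 ha) (Finsupp.mem_support_iff.1 hb)

theorem card_support_coeff_mul_of_injOn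
    (h : Set.InjOn (fun x : G × G => x.1 + x.2) (f.coeff.support ×ˢ g.coeff.support)) :
    #(f * g).coeff.support = #f.coeff.support * #g.coeff.support := by
  classical
  rw [support_coeff_mul_of_injOn h, card_add_iff.2 h]

end UniqueAdd

end AddMonoidAlgebra

theorem Nat.digits_sum_add_mul {b r m : ℕ} (hb : 1 < b) (hr : r < b) :
    (Nat.digits b (r + b * m)).sum = r + (Nat.digits b m).sum := by
  rcases eq_or_ne r 0 with rfl | hr0
  · rcases eq_or_ne m 0 with rfl | hm0
    · simp
    · rw [Nat.digits_add b hb 0 m hr (Or.inr hm0), List.sum_cons]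
  · rw [Nat.digits_add b hb r m hr (Or.inl hr0), List.sum_cons]

theorem Nat.digits_two_sum_two_mul (m : ℕ) :
    (Nat.digits 2 (2 * m)).sum = (Nat.digits 2 m).sum := by
  simpa using Nat.digits_sum_add_mul one_lt_two two_pos (m := m)

theorem Nat.digits_two_sum_two_mul_add_one (m : ℕ) :
    (Nat.digits 2 (2 * m + 1)).sum = (Nat.digits 2 m).sum + 1 := by
  rw [add_comm, Nat.digits_sum_add_mul one_lt_two one_lt_two, add_comm]

theorem Finset.sum_range_two_mul {M : Type*} [AddCommMonoid M] (f : ℕ → M) (n : ℕ) :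
    ∑ i ∈ range (2 * n), f i = ∑ i ∈ range n, (f (2 * i) + f (2 * i + 1)) := by
  induction n with
  | zero => simp
  | succ n ih => rw [mul_add, mul_one, sum_range_succ, sum_range_succ, sum_range_succ, ih, add_assoc]

theorem sum_range_two_pow_four_pow_digits_sum (k : ℕ) :
    ∑ n ∈ range (2 ^ k), 4 ^ (Nat.digits 2 n).sum = 5 ^ k := by
  induction k with
  | zero => simp
  | succ k ih =>
    have hpair (m : ℕ) : 4 ^ (Nat.digits 2 (2 * m)).sum + 4 ^ (Nat.digits 2 (2 * m + 1)).sum =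
        5 * 4 ^ (Nat.digits 2 m).sum := by
      rw [Nat.digits_two_sum_two_mul, Nat.digits_two_sum_two_mul_add_one, pow_succ]
      ring
    rw [pow_succ', sum_range_two_mul, sum_congr rfl fun m _ => hpair m, ← mul_sum, ih, pow_succ']

def unitVecs : Finset (ℤ × ℤ) := {(1, 0), (-1, 0), (0, 1), (0, -1)}

noncomputable def caT0Poly : (ZMod 2)[ℤ × ℤ] := ∑ d ∈ unitVecs, single d 1

def checkerboard : ℤ × ℤ →+ ZMod 2 :=
  (Int.castAddHom (ZMod 2)).comp ((AddMonoidHom.id ℤ).coprod (AddMonoidHom.id ℤ))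

theorem checkerboard_eq_iff {a b : ℤ × ℤ} :
    checkerboard a = checkerboard b ↔ (a.1 + a.2) % 2 = (b.1 + b.2) % 2 := by
  simpa [checkerboard] using ZMod.intCast_eq_intCast_iff' (a.1 + a.2) (b.1 + b.2) 2

theorem eq_of_unitVec_add_two_nsmul_eq {d d' a b : ℤ × ℤ} (hd : d ∈ unitVecs)
    (hd' : d' ∈ unitVecs) (hab : checkerboard a = checkerboard b) (h : d + 2 • a = d' + 2 • b) :
    d = d' ∧ a = b := by
  rw [checkerboard_eq_iff] at hab
  simp only [unitVecs, mem_insert, mem_singleton] at hd hd'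
  simp only [two_nsmul, Prod.ext_iff, Prod.fst_add, Prod.snd_add] at h ⊢
  rcases hd with rfl | rfl | rfl | rfl <;> rcases hd' with rfl | rfl | rfl | rfl <;> omega

theorem support_coeff_caT0Poly : caT0Poly.coeff.support = unitVecs := by
  ext p
  simp [caT0Poly, coeff_sum, Finsupp.single_apply]

theorem coeff_caT0Poly_mul (f : (ZMod 2)[ℤ × ℤ]) : (caT0Poly * f).coeff = caT0 f.coeff := by
  ext ⟨i, j⟩
  simp [caT0Poly, unitVecs, add_mul, caT0, ← sub_eq_add_neg, add_comm, add_left_comm]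

theorem iterate_caT0_seed2 (n : ℕ) : caT0^[n] seed2 = (caT0Poly ^ n).coeff := by
  induction n with
  | zero =>
    ext p
    simp [seed2, one_def, Finsupp.single_apply, eq_comm, Prod.mk_zero_zero]
  | succ n ih => rw [Function.iterate_succ_apply', ih, ← coeff_caT0Poly_mul, ← pow_succ']

theorem caT0Poly_pow_mem_gradeBy (n : ℕ) : caT0Poly ^ n ∈ gradeBy (ZMod 2) checkerboard n := by
  have hpoly : caT0Poly ∈ gradeBy (ZMod 2) checkerboard 1 :=
    Submodule.sum_mem _ fun d hd => by
      convert single_mem_gradeBy checkerboard d (1 : ZMod 2)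
      simp only [unitVecs, mem_insert, mem_singleton] at hd
      rcases hd with rfl | rfl | rfl | rfl <;> decide
  simpa using SetLike.pow_mem_graded n hpoly

theorem card_support_coeff_caT0Poly_mul_sq {g : (ZMod 2)[ℤ × ℤ]} {i : ZMod 2}
    (hg : g ∈ gradeBy (ZMod 2) checkerboard i) :
    #(caT0Poly * g ^ 2).coeff.support = 4 * #g.coeff.support := by
  have hinj : Set.InjOn (fun x : (ℤ × ℤ) × (ℤ × ℤ) => x.1 + x.2)
      (caT0Poly.coeff.support ×ˢ (g ^ 2).coeff.support) := by
    rintro ⟨d, _⟩ ⟨hd, hq⟩ ⟨d', _⟩ ⟨hd', hq'⟩ h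
    simp only [support_coeff_caT0Poly, support_coeff_pow_char, coe_image, mem_coe] at hd hd' hq hq'
    obtain ⟨a, ha, rfl⟩ := hq
    obtain ⟨b, hb, rfl⟩ := hq'
    obtain ⟨rfl, rfl⟩ := eq_of_unitVec_add_two_nsmul_eq hd hd' ((hg a ha).trans (hg b hb).symm) h
    rfl
  rw [card_support_coeff_mul_of_injOn hinj, support_coeff_caT0Poly, card_support_coeff_pow_char]
  rfl

theorem card_support_coeff_caT0Poly_pow (n : ℕ) :
    #(caT0Poly ^ n).coeff.support = 4 ^ (Nat.digits 2 n).sum := by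
  induction n using Nat.evenOddRec with
  | h0 => simp [one_def]
  | h_even m ih => rw [pow_mul', card_support_coeff_pow_char, ih, Nat.digits_two_sum_two_mul]
  | h_odd m ih =>
    rw [pow_succ', pow_mul', card_support_coeff_caT0Poly_mul_sq (caT0Poly_pow_mem_gradeBy m), ih,
      Nat.digits_two_sum_two_mul_add_one, pow_succ, mul_comm]

theorem caT0_num_cum :
    (∀ n : ℕ, {p : ℤ × ℤ | (caT0^[n] seed2) p ≠ 0}.ncard = 4 ^ (Nat.digits 2 n).sum) ∧
    (∀ k : ℕ, ∑ n ∈ Finset.range (2 ^ k),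
      {p : ℤ × ℤ | (caT0^[n] seed2) p ≠ 0}.ncard = 5 ^ k) := by
  have num (n : ℕ) : {p : ℤ × ℤ | (caT0^[n] seed2) p ≠ 0}.ncard = 4 ^ (Nat.digits 2 n).sum := by
    rw [iterate_caT0_seed2, ← card_support_coeff_caT0Poly_pow, ← Set.ncard_coe_finset,
      ← Finsupp.fun_support_eq]
    rfl
  refine ⟨num, fun k => ?_⟩
  simp only [num]
  exact sum_range_two_pow_four_pow_digits_sum k
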